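/- Let p : ℕ → ℝ be a sequence with p_i ≥ 1 for all i, and let A_p be the commutative Banach algebra { a : ℕ → ℂ : ‖a‖_p := Σ_i |a_i|·p_i < ∞ } with product (a*b)_k = a_k·b_k + a_k·(Σ_{j>k} b_j) + b_k·(Σ_{j>k} a_j). Suppose p has a bounded subsequence, i.e., there is a strictly increasing sequence (n_k) in ℕ with sup_k p_{n_k} < ∞. Then (e_{n_k})_{k∈ℕ} is a bounded approximate identity in A_p: sup_k ‖e_{n_k}‖_p < ∞ and ‖a * e_{n_k} − a‖_p → 0 as k → ∞ for every a ∈ A_p. -/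
import Mathlib


open Filter Topology

/-- The sum of the tail `Σ_{j > k} a j` of a complex sequence. -/
noncomputable def tailSum (a : ℕ → ℂ) (k : ℕ) : ℂ :=
  ∑' j : ℕ, if k < j then a j else 0

/-- The product `(a*b)_k = a_k b_k + a_k (Σ_{j>k} b_j) + b_k (Σ_{j>k} a_j)`,
the unique continuous bilinear extension of `e_i * e_j = e_{min i j}`. -/
noncomputable def kmul (a b : ℕ → ℂ) : ℕ → ℂ :=
  fun k => a k * b k + a k * tailSum b k + b k * tailSum a k

/-- Membership in the weighted `ℓ¹`-space `A_p`. -/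
def memAp (p : ℕ → ℝ) (a : ℕ → ℂ) : Prop :=
  Summable fun i => ‖a i‖ * p i

/-- The norm `‖a‖_p = Σ_i |a_i| p_i` of `A_p`. -/
noncomputable def pnorm (p : ℕ → ℝ) (a : ℕ → ℂ) : ℝ :=
  ∑' i, ‖a i‖ * p i

/-- The `i`-th unit coordinate sequence. -/
def unitSeq (i : ℕ) : ℕ → ℂ := fun k => if k = i then 1 else 0

lemma pnorm_unitSeq (p : ℕ → ℝ) (i : ℕ) : pnorm p (unitSeq i) = p i := by
  unfold pnorm unitSeq
  have h : (fun k => ‖(if k = i then (1:ℂ) else 0)‖ * p k) =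
      fun k => if k = i then p i else 0 := by
    funext k
    by_cases h : k = i <;> simp [h]
  rw [h, tsum_ite_eq]

lemma tailSum_unitSeq (m k : ℕ) :
    tailSum (unitSeq m) k = if k < m then 1 else 0 := by
  unfold tailSum unitSeq
  have h : (fun j => if k < j then (if j = m then (1:ℂ) else 0) else 0) =
      fun j => if j = m then (if k < m then (1:ℂ) else 0) else 0 := by
    funext j
    by_cases hj : j = m
    · subst hj; by_cases hk : k < j <;> simp [hk]
    · by_cases hk : k < j <;> simp [hj, hk]
  rw [h, tsum_ite_eq]

lemma tail_tendsto (f : ℕ → ℝ) (hf : Summable f) :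
    Tendsto (fun m => ∑' j, if m < j then f j else 0) atTop (𝓝 0) := by
  have key : ∀ m : ℕ, (∑' j, if m < j then f j else 0)
      = (∑' j, f j) - ∑ j ∈ Finset.range (m+1), f j := by
    intro m
    have hsum2 : Summable (fun j => if j ≤ m then f j else 0) := by
      apply summable_of_ne_finset_zero (s := Finset.range (m+1))
      intro j hj
      rw [Finset.mem_range] at hj
      rw [if_neg (by omega)]
    have hfun : (fun j => if m < j then f j else 0) =
        fun j => f j - (if j ≤ m then f j else 0) := by
      funext j
      by_cases h : m < j
      · simp [h, Nat.not_le.mpr h]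
      · simp [h, Nat.not_lt.mp h]
    have h1 : (∑' j, if j ≤ m then f j else 0) = ∑ j ∈ Finset.range (m+1), f j := by
      rw [tsum_eq_sum (s := Finset.range (m+1))]
      · apply Finset.sum_congr rfl
        intro j hj
        rw [Finset.mem_range] at hj
        simp [Nat.lt_succ_iff.mp hj]
      · intro j hj
        rw [Finset.mem_range] at hj
        rw [if_neg (by omega)]
    rw [hfun, Summable.tsum_sub hf hsum2, h1]
  simp only [key]
  have hpart : Tendsto (fun m : ℕ => ∑ j ∈ Finset.range (m+1), f j) atTop (𝓝 (∑' j, f j)) :=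
    hf.hasSum.tendsto_sum_nat.comp (tendsto_add_atTop_nat 1)
  have := (tendsto_const_nhds (x := ∑' j, f j) (f := atTop)).sub hpart
  simpa using this

/-- If the weight `p` (with `p_i ≥ 1`) has a bounded subsequence
`(p_{n_k})`, then `(e_{n_k})` is a bounded approximate identity in `A_p`. -/
theorem stmt_15 (p : ℕ → ℝ) (hp : ∀ i, 1 ≤ p i)
    (n : ℕ → ℕ) (hn : StrictMono n) (M : ℝ) (hM : ∀ k, p (n k) ≤ M) :
    (∃ M' : ℝ, ∀ k, pnorm p (unitSeq (n k)) ≤ M') ∧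
    (∀ a : ℕ → ℂ, memAp p a →
      Tendsto (fun k => pnorm p (kmul a (unitSeq (n k)) - a)) atTop (𝓝 (0 : ℝ))) := by
  constructor
  · exact ⟨M, fun k => by rw [pnorm_unitSeq]; exact hM k⟩
  · intro a ha
    set f : ℕ → ℝ := fun j => ‖a j‖ * p j with hf
    have hf0 : ∀ j, 0 ≤ f j := fun j =>
      mul_nonneg (norm_nonneg _) (le_trans zero_le_one (hp j))
    -- tail sums
    set T : ℕ → ℝ := fun m => ∑' j, if m < j then f j else 0 with hT
    have hite0 : ∀ m j, 0 ≤ (if m < j then f j else 0) := by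
      intro m j; by_cases h : m < j <;> simp [h, hf0 j]
    have hTsummable : ∀ m, Summable (fun j => if m < j then f j else 0) := by
      intro m
      apply ha.of_nonneg_of_le (hite0 m)
      intro j
      by_cases h : m < j
      · simp only [h, if_true]; exact le_rfl
      · simp only [h, if_false]; exact hf0 j
    have hT0 : ∀ m, 0 ≤ T m := fun m => tsum_nonneg (hite0 m)
    -- key bound : pnorm of the difference
    have key : ∀ m, p m ≤ M → pnorm p (kmul a (unitSeq m) - a) ≤ (M + 1) * T m := by
      intro m hpm
      -- compute difference
      have hd : ∀ j, (kmul a (unitSeq m) - a) j =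
          if j < m then 0 else if j = m then tailSum a m else -a j := by
        intro j
        simp only [Pi.sub_apply, kmul, unitSeq, tailSum_unitSeq]
        rcases lt_trichotomy j m with h | h | h
        · simp [h, Nat.ne_of_lt h]
        · subst h; simp
        · simp [Nat.lt_asymm h, Nat.ne_of_gt h, Nat.not_lt.mpr (le_of_lt h)]
      -- norm of the tail term
      have htail : ‖tailSum a m‖ ≤ T m := by
        have hs : Summable (fun j => ‖if m < j then a j else 0‖) := by
          apply (hTsummable m).of_nonneg_of_le (fun j => norm_nonneg _)
          intro j
          by_cases h : m < j
          · simp only [h, if_true]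
            calc ‖a j‖ ≤ ‖a j‖ * p j := le_mul_of_one_le_right (norm_nonneg _) (hp j)
              _ = f j := rfl
          · simp [h, hf0 j]
        calc ‖tailSum a m‖ ≤ ∑' j, ‖if m < j then a j else 0‖ :=
              norm_tsum_le_tsum_norm hs
          _ ≤ T m := by
              apply Summable.tsum_le_tsum _ hs (hTsummable m)
              intro j
              by_cases h : m < j
              · simp only [h, if_true]
                exact le_mul_of_one_le_right (norm_nonneg _) (hp j)
              · simp [h, hf0 j]
      -- dominating summable sequence
      set c : ℕ → ℝ := fun j => (if j = m then M * T m else 0) +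
          (if m < j then f j else 0) with hc
      have hcs : Summable c := by
        apply Summable.add _ (hTsummable m)
        apply summable_of_ne_finset_zero (s := {m})
        intro j hj
        simp only [Finset.mem_singleton] at hj
        simp [hj]
      have hterm : ∀ j, ‖(kmul a (unitSeq m) - a) j‖ * p j ≤ c j := by
        intro j
        rw [hd j]
        rcases lt_trichotomy j m with h | h | h
        · simp [hc, h, Nat.ne_of_lt h, Nat.lt_asymm h]
        · subst h
          simp only [lt_irrefl, if_false, if_neg (lt_irrefl j), if_pos rfl, hc, add_zero]
          calc ‖tailSum a j‖ * p j ≤ T j * M :=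
                mul_le_mul htail hpm (le_trans zero_le_one (hp j)) (hT0 j)
            _ = M * T j := mul_comm _ _
        · have h1 : ¬ j < m := Nat.lt_asymm h
          have h2 : j ≠ m := Nat.ne_of_gt h
          simp [hc, h1, h2, h, f]
      have hds : Summable (fun j => ‖(kmul a (unitSeq m) - a) j‖ * p j) := by
        apply hcs.of_nonneg_of_le (fun j => ?_) hterm
        exact mul_nonneg (norm_nonneg _) (le_trans zero_le_one (hp j))
      have hsum : pnorm p (kmul a (unitSeq m) - a) ≤ ∑' j, c j :=
        Summable.tsum_le_tsum hterm hds hcs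
      have hcval : ∑' j, c j = M * T m + T m := by
        rw [hc, Summable.tsum_add _ (hTsummable m), tsum_ite_eq]
        apply summable_of_ne_finset_zero (s := {m})
        intro j hj
        simp only [Finset.mem_singleton] at hj
        simp [hj]
      rw [hcval] at hsum
      linarith [hsum]
    -- conclusion via squeeze
    have hTn : Tendsto (fun k => T (n k)) atTop (𝓝 0) :=
      (tail_tendsto f ha).comp hn.tendsto_atTop
    have hbound : Tendsto (fun k => (M + 1) * T (n k)) atTop (𝓝 0) := by
      have := hTn.const_mul (M + 1)
      simpa using this
    apply squeeze_zero (fun k => ?_) (fun k => key (n k) (hM k)) hbound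
    exact tsum_nonneg (fun j => mul_nonneg (norm_nonneg _) (le_trans zero_le_one (hp j)))
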